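/- Let A be a process executing the Read Checking protocol. Whatever the execution, the system reaches a configuration in which A's program counter is no longer within the repeat loop; in particular no process stays in the repeat loop forever and the protocol is deadlock-free. -/

import Mathlib

/-!
An operational model of the Read Checking protocol of Johnen, Lavallée, Lavault.

A network is a finite-degree system of processes; each process `p` has `deg p ≥ 1`
neighbours, enumerated by `nbr p : Fin (deg p) → Proc`.  Communication is via link
registers under read/write atomicity: `Write_{AB}` and `Read_{AB}` are owned
(written) by `A` and can be read by its neighbour `B`.
-/

structure Network where
  Proc : Type
  deg : Proc → ℕ
  deg_pos : ∀ p, 0 < deg p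
  nbr : (p : Proc) → Fin (deg p) → Proc
  nbr_ne : ∀ p i, nbr p i ≠ p
  nbr_inj : ∀ p, Function.Injective (nbr p)
  nbr_symm : ∀ p i, ∃ j, nbr (nbr p i) j = p

namespace RC

open Classical

/-- Program counter of a process with `n` neighbours running the Read Checking
protocol.  `write i` : about to execute `write(Write_{AB_i}, get_i)`;
`loop i k` : inside the repeat loop, about to execute the `k`-th atomic action
(`k = 0`: `r_i ← read(Write_{B_iA})`, `k = 1`: `write(Read_{AB_i}, r_i)`,
`k = 2`: `val_i ← read(Read_{B_iA})`, `k = 3`: `s_i ← read(Write_{AB_i})`,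
followed, after the last neighbour, by the (local) exit test `∀ i, val_i = s_i`). -/
inductive PC (n : ℕ) : Type
  | write : Fin n → PC n
  | loop : Fin n → Fin 4 → PC n

/-- The link registers: `W A B` is `Write_{AB}`, `R A B` is `Read_{AB}` (both owned by `A`). -/
inductive Reg (Proc : Type) : Type
  | W : Proc → Proc → Reg Proc
  | R : Proc → Proc → Reg Proc

/-- An atomic action: a single read of one register, or a single write of a value
into one register (read/write atomicity). -/
inductive Act (Proc Val : Type) : Type
  | read : Reg Proc → Act Proc Val
  | write : Reg Proc → Val → Act Proc Val

/-- A configuration: contents of all link registers, and local state of every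
process (program counter and the local variables `r_i`, `val_i`, `s_i`). -/
structure Config (Net : Network) (Val : Type) : Type where
  regW : Net.Proc → Net.Proc → Val
  regR : Net.Proc → Net.Proc → Val
  pc : (p : Net.Proc) → PC (Net.deg p)
  rv : (p : Net.Proc) → Fin (Net.deg p) → Val
  vv : (p : Net.Proc) → Fin (Net.deg p) → Val
  sv : (p : Net.Proc) → Fin (Net.deg p) → Val

def finSucc? {n : ℕ} (i : Fin n) : Option (Fin n) :=
  if h : i.1 + 1 < n then some ⟨i.1 + 1, h⟩ else none

noncomputable def upd2 {Proc : Type} {β : Type} (f : Proc → Proc → β) (a b : Proc) (v : β) :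
    Proc → Proc → β :=
  fun x y => if x = a ∧ y = b then v else f x y

/-- One atomic step of process `p`, labelled by the action performed.
The value written by `write(Write_{AB_i}, get_i)` is arbitrary: `get_i` is an
arbitrary helper function returning the next message to be sent. -/
inductive Step (Net : Network) (Val : Type) :
    Config Net Val → Net.Proc → Act Net.Proc Val → Config Net Val → Prop
  | writeW (c : Config Net Val) (p : Net.Proc) (i : Fin (Net.deg p)) (v : Val)
      (h : c.pc p = .write i) :
      Step Net Val c p (.write (.W p (Net.nbr p i)) v)
        { c with
          regW := upd2 c.regW p (Net.nbr p i) v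
          pc := Function.update c.pc p
            (match finSucc? i with
             | some j => PC.write j
             | none => PC.loop ⟨0, Net.deg_pos p⟩ 0) }
  | readNbrW (c : Config Net Val) (p : Net.Proc) (i : Fin (Net.deg p))
      (h : c.pc p = .loop i 0) :
      Step Net Val c p (.read (.W (Net.nbr p i) p))
        { c with
          rv := Function.update c.rv p (Function.update (c.rv p) i (c.regW (Net.nbr p i) p))
          pc := Function.update c.pc p (PC.loop i 1) }
  | writeR (c : Config Net Val) (p : Net.Proc) (i : Fin (Net.deg p))
      (h : c.pc p = .loop i 1) :
      Step Net Val c p (.write (.R p (Net.nbr p i)) (c.rv p i))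
        { c with
          regR := upd2 c.regR p (Net.nbr p i) (c.rv p i)
          pc := Function.update c.pc p (PC.loop i 2) }
  | readNbrR (c : Config Net Val) (p : Net.Proc) (i : Fin (Net.deg p))
      (h : c.pc p = .loop i 2) :
      Step Net Val c p (.read (.R (Net.nbr p i) p))
        { c with
          vv := Function.update c.vv p (Function.update (c.vv p) i (c.regR (Net.nbr p i) p))
          pc := Function.update c.pc p (PC.loop i 3) }
  | readOwnW (c : Config Net Val) (p : Net.Proc) (i : Fin (Net.deg p))
      (h : c.pc p = .loop i 3) :
      Step Net Val c p (.read (.W p (Net.nbr p i)))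
        { c with
          sv := Function.update c.sv p (Function.update (c.sv p) i (c.regW p (Net.nbr p i)))
          pc := Function.update c.pc p
            (match finSucc? i with
             | some j => PC.loop j 0
             | none =>
               if ∀ j, c.vv p j = Function.update (c.sv p) i (c.regW p (Net.nbr p i)) j
               then PC.write ⟨0, Net.deg_pos p⟩
               else PC.loop ⟨0, Net.deg_pos p⟩ 0) }

/-- An execution: an infinite sequence of configurations, starting from an
arbitrary configuration, where at each instant `t` the scheduled process
`sched t` performs the atomic action `act t`. -/
structure Exec (Net : Network) (Val : Type) : Type where
  cfg : ℕ → Config Net Val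
  sched : ℕ → Net.Proc
  act : ℕ → Act Net.Proc Val
  step : ∀ t, Step Net Val (cfg t) (sched t) (act t) (cfg (t + 1))

/-- A process is enabled when it can perform an atomic step. -/
def Enabled {Net : Network} {Val : Type} (c : Config Net Val) (p : Net.Proc) : Prop :=
  ∃ a c', Step Net Val c p a c'

/-- Fair scheduler: any process that can continuously perform an action
eventually performs one. -/
def Exec.Fair {Net : Network} {Val : Type} (e : Exec Net Val) : Prop :=
  ∀ p t, (∀ u, t ≤ u → Enabled (e.cfg u) p) → ∃ u, t ≤ u ∧ e.sched u = p

/-- The program counter of `p` is inside the repeat loop. -/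
def InLoop {Net : Network} {Val : Type} (c : Config Net Val) (p : Net.Proc) : Prop :=
  ∃ i k, c.pc p = PC.loop i k

/-- `B` allows `A` to write iff `Read_{BA} = Write_{AB}`. -/
def Allows {Net : Network} {Val : Type} (c : Config Net Val) (B A : Net.Proc) : Prop :=
  c.regR B A = c.regW A B

/-- `B` is a neighbour of `A`. -/
def Neighbour (Net : Network) (A B : Net.Proc) : Prop := ∃ i, Net.nbr A i = B

/-- At instant `t`, process `A` writes (some value) into its register `Write_{AB}`. -/
def WritesW {Net : Network} {Val : Type} (e : Exec Net Val) (A B : Net.Proc) (t : ℕ) : Prop :=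
  e.sched t = A ∧ ∃ v, e.act t = Act.write (Reg.W A B) v

/-- At instant `t`, process `B` reads from the register `Write_{AB}` of its neighbour `A`. -/
def ReadsW {Net : Network} {Val : Type} (e : Exec Net Val) (A B : Net.Proc) (t : ℕ) : Prop :=
  e.sched t = B ∧ e.act t = Act.read (Reg.W A B)

end RC

/-!
Suppose `A` stays in its repeat loop from some instant on. Then `A` never writes its registers
`Write_{AB}` again. Every process is always enabled, so by fairness each neighbour `B` keeps running
through its cycle; once `B` has copied `Write_{AB}` into `r_j` and then into `Read_{BA}`, both stay
equal to `Write_{AB}` forever, so eventually every neighbour allows `A` to write. From then on a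
complete pass of `A` through its loop reads `val_i = s_i` for every `i`, and the exit test succeeds.
-/

open Filter

lemma eventually_atTop_of_frequently_of_imp_succ {P : ℕ → Prop}
    (hstep : ∀ᶠ u in atTop, P u → P (u + 1)) (hP : ∃ᶠ u in atTop, P u) :
    ∀ᶠ u in atTop, P u := by
  obtain ⟨N, hN⟩ := eventually_atTop.1 hstep
  obtain ⟨u₀, hu₀, hPu₀⟩ := frequently_atTop.1 hP N
  refine eventually_atTop.2 ⟨u₀, fun u hu => ?_⟩
  induction u, hu using Nat.le_induction with
  | base => exact hPu₀
  | succ u hu ih => exact hN u (hu₀.trans hu) ih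

namespace RC

open Classical

variable {Net : Network} {Val : Type}

namespace PC

variable {n : ℕ}

/-- Position on the cycle `write 0, …, write (n-1), loop 0 0, …, loop (n-1) 3`. -/
def pos : PC n → ℕ
  | .write i => i
  | .loop i k => n + 4 * i + k

lemma pos_lt (x : PC n) : x.pos < 5 * n := by
  cases x with
  | write i => simp only [pos]; omega
  | loop i k => simp only [pos]; omega

lemma pos_injective : Function.Injective (pos : PC n → ℕ) := by
  intro x y h
  cases x <;> cases y <;> simp only [pos] at h
  all_goals first | omega | (congr 1 <;> ext <;> omega)

def distTo (x y : PC n) : ℕ :=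
  if x.pos ≤ y.pos then y.pos - x.pos else 5 * n + y.pos - x.pos

end PC

lemma val_finSucc?_eq_some {n : ℕ} {i j : Fin n} (h : finSucc? i = some j) : j.1 = i.1 + 1 := by
  unfold finSucc? at h
  split at h <;> grind

lemma finSucc?_eq_none {n : ℕ} {i : Fin n} (h : i.1 + 1 = n) : finSucc? i = none := by
  simp [finSucc?, h]

/-- All reads of the current pass of `p` through its repeat loop have so far returned
`val_l = s_l = Write_{p B_l}`. -/
def PassChecked (c : Config Net Val) (p : Net.Proc) : Prop :=
  ∀ i k, c.pc p = .loop i k →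
    (∀ l < i, c.vv p l = c.regW p (Net.nbr p l) ∧ c.sv p l = c.regW p (Net.nbr p l)) ∧
      (k = 3 → c.vv p i = c.regW p (Net.nbr p i))

lemma passChecked_of_pc_eq_loop_zero {c : Config Net Val} {p : Net.Proc}
    (hpc : c.pc p = .loop ⟨0, Net.deg_pos p⟩ 0) : PassChecked c p := by
  intro i k h
  rw [hpc] at h
  cases h
  refine ⟨fun l hl => ?_, fun h => absurd h (by decide)⟩
  exact absurd hl (Nat.not_lt_zero l)

namespace Step

variable {c c' : Config Net Val} {q p : Net.Proc} {a : Act Net.Proc Val}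

lemma pos_advance (h : Step Net Val c q a c') :
    (c'.pc q).pos = (c.pc q).pos + 1 ∨
      (c.pc q).pos = 5 * Net.deg q - 1 ∧ ((c'.pc q).pos = 0 ∨ (c'.pc q).pos = Net.deg q) := by
  cases h with
  | writeW i v hpc =>
    simp only [hpc, Function.update_self, finSucc?]
    split_ifs <;> simp [PC.pos]; omega
  | readOwnW i hpc =>
    simp only [hpc, Function.update_self, finSucc?]
    split_ifs <;> simp [PC.pos] <;> omega
  | _ i hpc => simp [hpc, PC.pos]

lemma distTo_lt (h : Step Net Val c q a c') {j : Fin (Net.deg q)} {k : Fin 4}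
    (hne : c.pc q ≠ .loop j k) :
    (c'.pc q).distTo (.loop j k) < (c.pc q).distTo (.loop j k) := by
  have hT : Net.deg q ≤ (PC.loop j k).pos := by simp only [PC.pos]; omega
  have := (PC.loop j k).pos_lt
  have := (c'.pc q).pos_lt
  have hpos : (c.pc q).pos ≠ (PC.loop j k).pos := fun h => hne (PC.pos_injective h)
  unfold PC.distTo
  -- the wrap-around jump lands at `0` or `n`, never beyond a loop target
  rcases h.pos_advance with h | h <;> split_ifs <;> omega

lemma pc_eq_of_ne (h : Step Net Val c q a c') (hp : q ≠ p) : c'.pc p = c.pc p := by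
  cases h <;> simp [Function.update_of_ne hp.symm]

lemma vv_eq_of_ne (h : Step Net Val c q a c') (hp : q ≠ p) : c'.vv p = c.vv p := by
  cases h <;> simp [Function.update_of_ne hp.symm]

lemma rv_eq_of_ne (h : Step Net Val c q a c') (hp : q ≠ p) : c'.rv p = c.rv p := by
  cases h <;> simp [Function.update_of_ne hp.symm]

lemma sv_eq_of_ne (h : Step Net Val c q a c') (hp : q ≠ p) : c'.sv p = c.sv p := by
  cases h <;> simp [Function.update_of_ne hp.symm]

lemma regW_eq_of_ne (h : Step Net Val c q a c') (hp : q ≠ p) : c'.regW p = c.regW p := by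
  funext y
  cases h <;> simp [upd2, hp.symm]

lemma regW_eq_of_inLoop (h : Step Net Val c q a c') (hp : InLoop c p) : c'.regW p = c.regW p := by
  obtain rfl | hq := eq_or_ne q p
  · obtain ⟨i, k, hpc⟩ := hp
    cases h <;> simp_all
  · exact h.regW_eq_of_ne hq

lemma rv_eq_of_loop_zero (h : Step Net Val c p a c') {j : Fin (Net.deg p)}
    (hpc : c.pc p = .loop j 0) : c'.rv p j = c.regW (Net.nbr p j) p := by
  cases h <;> simp_all

lemma regR_eq_of_loop_one (h : Step Net Val c p a c') {j : Fin (Net.deg p)}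
    (hpc : c.pc p = .loop j 1) : c'.regR p (Net.nbr p j) = c.rv p j := by
  cases h <;> simp_all [upd2]

lemma rv_eq_of_regW_eq (h : Step Net Val c q a c') {j : Fin (Net.deg p)}
    (hW : c.regW (Net.nbr p j) p = c.rv p j) : c'.rv p j = c.rv p j := by
  obtain rfl | hq := eq_or_ne q p
  · cases h with
    | readNbrW i hpc =>
      rcases eq_or_ne i j with rfl | hij
      · simpa using hW
      · simp [Function.update_of_ne hij.symm]
    | _ => rfl
  · rw [h.rv_eq_of_ne hq]

lemma regR_eq_of_rv_eq (h : Step Net Val c q a c') {j : Fin (Net.deg p)}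
    (hR : c.regR p (Net.nbr p j) = c.rv p j) :
    c'.regR p (Net.nbr p j) = c.regR p (Net.nbr p j) := by
  cases h <;> simp [upd2]
  grind [Network.nbr_inj]

lemma passChecked_self (h : Step Net Val c p a c') (hallow : ∀ i, Allows c (Net.nbr p i) p)
    (hc : PassChecked c p) : PassChecked c' p := by
  intro i' k' h'
  cases h with
  | writeW i v hpc =>
    simp only [Function.update_self] at h'
    split at h' <;> cases h'
    exact ⟨fun l hl => absurd hl (Nat.not_lt_zero l), fun h => absurd h (by decide)⟩
  | readNbrW i hpc | writeR i hpc =>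
    simp only [Function.update_self, PC.loop.injEq] at h'
    obtain ⟨rfl, rfl⟩ := h'
    simpa using (hc _ _ hpc).1
  | readNbrR i hpc =>
    simp only [Function.update_self, PC.loop.injEq] at h'
    obtain ⟨rfl, rfl⟩ := h'
    refine ⟨fun l hl => ?_, fun _ => ?_⟩
    · simpa [Function.update_of_ne hl.ne] using (hc _ _ hpc).1 l hl
    · simp only [Function.update_self]
      exact hallow i
  | readOwnW i hpc =>
    obtain ⟨hprev, hcur⟩ := hc _ _ hpc
    simp only [Function.update_self] at h'
    split at h'
    next j hj =>
      simp only [PC.loop.injEq] at h'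
      obtain ⟨rfl, rfl⟩ := h'
      refine ⟨fun l hl => ?_, fun h => absurd h (by decide)⟩
      have := val_finSucc?_eq_some hj
      rcases (show l < i ∨ l = i by omega) with hl | rfl
      · simpa [Function.update_of_ne hl.ne] using hprev l hl
      · simpa using hcur rfl
    next =>
      split_ifs at h'
      cases h'
      exact ⟨fun l hl => absurd hl (Nat.not_lt_zero l), fun h => absurd h (by decide)⟩

lemma passChecked (h : Step Net Val c q a c') (hallow : ∀ i, Allows c (Net.nbr p i) p)
    (hc : PassChecked c p) : PassChecked c' p := by
  obtain rfl | hq := eq_or_ne q p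
  · exact h.passChecked_self hallow hc
  · unfold PassChecked
    rwa [h.pc_eq_of_ne hq, h.vv_eq_of_ne hq, h.sv_eq_of_ne hq, h.regW_eq_of_ne hq]

lemma not_inLoop (h : Step Net Val c p a c') {i : Fin (Net.deg p)} (hpc : c.pc p = .loop i 3)
    (hi : i.1 + 1 = Net.deg p) (hc : PassChecked c p) : ¬ InLoop c' p := by
  obtain ⟨hprev, hcur⟩ := hc _ _ hpc
  have htest : ∀ l, c.vv p l = Function.update (c.sv p) i (c.regW p (Net.nbr p i)) l := by
    intro l
    rcases (show l < i ∨ l = i by omega) with hl | rfl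
    · rw [Function.update_of_ne hl.ne, (hprev l hl).1, (hprev l hl).2]
    · rw [Function.update_self, hcur rfl]
  rintro ⟨j, k, hj⟩
  cases h with
  | readOwnW i' hpc' =>
    obtain rfl : i' = i := by simpa [hpc] using hpc'.symm
    simp [finSucc?_eq_none hi, htest] at hj
  | _ => simp [hpc] at *

end Step

lemma enabled (c : Config Net Val) (p : Net.Proc) : Enabled c p := by
  rcases h : c.pc p with i | ⟨i, k⟩
  · exact ⟨_, _, .writeW c p i (c.regW p p) h⟩
  · match k, h with
    | 0, h => exact ⟨_, _, .readNbrW c p i h⟩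
    | 1, h => exact ⟨_, _, .writeR c p i h⟩
    | 2, h => exact ⟨_, _, .readNbrR c p i h⟩
    | 3, h => exact ⟨_, _, .readOwnW c p i h⟩

namespace Exec

variable {e : Exec Net Val}

lemma Fair.frequently_sched (hfair : e.Fair) (p : Net.Proc) : ∃ᶠ u in atTop, e.sched u = p :=
  frequently_atTop.2 fun a => hfair p a fun _ _ => enabled _ p

lemma pc_eq_of_forall_sched_ne {p : Net.Proc} {a b : ℕ} (hab : a ≤ b)
    (h : ∀ u, a ≤ u → u < b → e.sched u ≠ p) : (e.cfg b).pc p = (e.cfg a).pc p := by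
  induction b, hab using Nat.le_induction with
  | base => rfl
  | succ b hab ih =>
    rw [(e.step b).pc_eq_of_ne (h b hab b.lt_succ_self),
      ih fun u hau hub => h u hau (hub.trans b.lt_succ_self)]

lemma Fair.exists_sched_pc_eq (hfair : e.Fair) (p : Net.Proc) (a : ℕ) :
    ∃ b ≥ a, e.sched b = p ∧ (e.cfg b).pc p = (e.cfg a).pc p := by
  have hex : ∃ b, a ≤ b ∧ e.sched b = p := frequently_atTop.1 (hfair.frequently_sched p) a
  obtain ⟨hab, hb⟩ := Nat.find_spec hex
  exact ⟨Nat.find hex, hab, hb,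
    pc_eq_of_forall_sched_ne hab fun u hau hub hu => Nat.find_min hex hub ⟨hau, hu⟩⟩

lemma Fair.frequently_sched_loop (hfair : e.Fair) (p : Net.Proc) (j : Fin (Net.deg p))
    (k : Fin 4) :
    ∃ᶠ u in atTop, e.sched u = p ∧ (e.cfg u).pc p = .loop j k := by
  refine frequently_atTop.2 fun a => ?_
  induction hd : ((e.cfg a).pc p).distTo (.loop j k) using Nat.strong_induction_on
    generalizing a with
  | _ d ih =>
    obtain ⟨b, hab, hsched, hpc⟩ := hfair.exists_sched_pc_eq p a
    by_cases htarget : (e.cfg b).pc p = .loop j k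
    · exact ⟨b, hab, hsched, htarget⟩
    · have hstep := e.step b
      rw [hsched] at hstep
      have hlt := hstep.distTo_lt htarget
      rw [hpc, hd] at hlt
      obtain ⟨u, hu, hu'⟩ := ih _ hlt (b + 1) rfl
      exact ⟨u, by omega, hu'⟩

lemma exists_eventually_regW_eq {p : Net.Proc} (hloop : ∀ᶠ u in atTop, InLoop (e.cfg u) p) :
    ∃ w, ∀ᶠ u in atTop, (e.cfg u).regW p = w := by
  obtain ⟨N, hN⟩ := eventually_atTop.1 hloop
  refine ⟨(e.cfg N).regW p, eventually_atTop.2 ⟨N, fun u hu => ?_⟩⟩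
  induction u, hu using Nat.le_induction with
  | base => rfl
  | succ u hu ih => rw [(e.step u).regW_eq_of_inLoop (hN u hu), ih]

lemma Fair.eventually_allows (hfair : e.Fair) {A B : Net.Proc} (hB : Neighbour Net B A) {w : Val}
    (hW : ∀ᶠ u in atTop, (e.cfg u).regW A B = w) : ∀ᶠ u in atTop, Allows (e.cfg u) B A := by
  obtain ⟨j, rfl⟩ := hB
  have hrv : ∀ᶠ u in atTop, (e.cfg u).rv B j = w := by
    refine eventually_atTop_of_frequently_of_imp_succ (hW.mono fun u hu hrv => ?_) ?_
    · rw [(e.step u).rv_eq_of_regW_eq (hu.trans hrv.symm), hrv]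
    · refine (tendsto_add_atTop_nat 1).frequently ?_
      refine ((hfair.frequently_sched_loop B j 0).and_eventually hW).mono ?_
      rintro u ⟨⟨hsched, hpc⟩, hu⟩
      have hstep := e.step u
      rw [hsched] at hstep
      rw [hstep.rv_eq_of_loop_zero hpc, hu]
  have hR : ∀ᶠ u in atTop, (e.cfg u).regR B (Net.nbr B j) = w := by
    refine eventually_atTop_of_frequently_of_imp_succ (hrv.mono fun u hu hR => ?_) ?_
    · rw [(e.step u).regR_eq_of_rv_eq (hR.trans hu.symm), hR]
    · refine (tendsto_add_atTop_nat 1).frequently ?_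
      refine ((hfair.frequently_sched_loop B j 1).and_eventually hrv).mono ?_
      rintro u ⟨⟨hsched, hpc⟩, hu⟩
      have hstep := e.step u
      rw [hsched] at hstep
      rw [hstep.regR_eq_of_loop_one hpc, hu]
  filter_upwards [hR, hW] with u hRu hWu
  exact hRu.trans hWu.symm

lemma Fair.eventually_passChecked (hfair : e.Fair) {A : Net.Proc}
    (hallow : ∀ᶠ u in atTop, ∀ i, Allows (e.cfg u) (Net.nbr A i) A) :
    ∀ᶠ u in atTop, PassChecked (e.cfg u) A :=
  eventually_atTop_of_frequently_of_imp_succ (hallow.mono fun u hu => (e.step u).passChecked hu)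
    ((hfair.frequently_sched_loop A ⟨0, Net.deg_pos A⟩ 0).mono fun _ hu =>
      passChecked_of_pc_eq_loop_zero hu.2)

end Exec

end RC

open RC in
/-- Let `A` be a process executing the Read Checking protocol.
Whatever the (fair) execution, from any instant the system reaches a configuration
in which the program counter of `A` is no longer within the repeat loop; in
particular no process stays in the repeat loop forever (the protocol is
deadlock-free). -/
theorem read_checking_exits_loop (Net : Network) (Val : Type)
    (e : Exec Net Val) (hfair : e.Fair) (A : Net.Proc) (t : ℕ) :
    ∃ u, t ≤ u ∧ ¬ InLoop (e.cfg u) A := by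
  by_contra! hcon
  have hloop : ∀ᶠ u in atTop, InLoop (e.cfg u) A := eventually_atTop.2 ⟨t, hcon⟩
  obtain ⟨w, hW⟩ := e.exists_eventually_regW_eq hloop
  have hallow : ∀ᶠ u in atTop, ∀ i, Allows (e.cfg u) (Net.nbr A i) A :=
    eventually_all.2 fun i =>
      hfair.eventually_allows (Net.nbr_symm A i) (hW.mono fun _ hu => congrFun hu _)
  have hlast : Net.deg A - 1 + 1 = Net.deg A := Nat.sub_add_cancel (Net.deg_pos A)
  obtain ⟨u, ⟨hsched, hpc⟩, hpass, hloop_next⟩ :=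
    ((hfair.frequently_sched_loop A ⟨Net.deg A - 1, by omega⟩ 3).and_eventually
      ((hfair.eventually_passChecked hallow).and
        ((tendsto_add_atTop_nat 1).eventually hloop))).exists
  have hstep := e.step u
  rw [hsched] at hstep
  exact hstep.not_inLoop hpc hlast hpass hloop_next
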